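/- Suppose X is an ℝ^d-valued random variable satisfying the distributional equation X =_d Σ_{j=1}^∞ A_j X^{(j)} + b as above, with ψ(x) := sup_{‖t‖ ≥ x} |φ(t)| and ψ_j the corresponding functions for the X^{(j)}. Let α_j := min_{‖t‖=1} ‖A_j^T t‖. Then ψ(x) ≤ E[∏_{j=1}^∞ ψ_j(α_j x)] for all x ≥ 0. -/

import Mathlib

open MeasureTheory ProbabilityTheory Matrix
open scoped RealInnerProductSpace

/-- View a plain vector as an element of Euclidean space. -/
noncomputable def toEuc {d : ℕ} (v : Fin d → ℝ) : EuclideanSpace ℝ (Fin d) :=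
  (WithLp.equiv 2 (Fin d → ℝ)).symm v

/-- View an element of Euclidean space as a plain vector. -/
noncomputable def ofEuc {d : ℕ} (v : EuclideanSpace ℝ (Fin d)) : Fin d → ℝ :=
  WithLp.equiv 2 (Fin d → ℝ) v

/-- `ψ(x) := sup_{‖t‖ ≥ x} |φ(t)|`, where `φ` is the characteristic function of `Y`. -/
noncomputable def psiSup {Ω : Type*} [MeasurableSpace Ω] (μ : Measure Ω) {d : ℕ}
    (Y : Ω → EuclideanSpace ℝ (Fin d)) (x : ℝ) : ℝ :=
  sSup {y : ℝ | ∃ t : EuclideanSpace ℝ (Fin d), x ≤ ‖t‖ ∧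
    y = ‖∫ ω, Complex.exp ((⟪t, Y ω⟫ : ℝ) * Complex.I) ∂μ‖}

/-- The smallest singular value of `A`, i.e. `min_{‖t‖=1} ‖Aᵀ t‖`. -/
noncomputable def minSingular {d : ℕ} (A : Matrix (Fin d) (Fin d) ℝ) : ℝ :=
  sInf {y : ℝ | ∃ t : EuclideanSpace ℝ (Fin d), ‖t‖ = 1 ∧ y = ‖toEuc (Aᵀ *ᵥ ofEuc t)‖}

/-!
For `‖t‖ ≥ x`, `φ(t)` is the limit of the characteristic integrals of the partial sums
`∑_{j<n} A_j X^{(j)} + b`. Since `(A, b)` is independent of the `X^{(j)}`, integrating first over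
the `X^{(j)}` turns each of these into `E[e^{i⟨t,b⟩} ∏_{j<n} φ_j(A_jᵀ t)]`, and
`‖A_jᵀ t‖ ≥ α_j ‖t‖ ≥ α_j x` bounds `|φ_j(A_jᵀ t)|` by `ψ_j(α_j x)`. Both sides then pass to the
limit by dominated convergence, the partial products of factors in `[0, 1]` decreasing to the
infinite product.
-/

open Filter Topology

section Euclidean

variable {d : ℕ}

lemma inner_toEuc_mulVec (M : Matrix (Fin d) (Fin d) ℝ) (t v : EuclideanSpace ℝ (Fin d)) :
    ⟪t, toEuc (M *ᵥ ofEuc v)⟫ = ⟪toEuc (Mᵀ *ᵥ ofEuc t), v⟫ := by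
  simp only [EuclideanSpace.inner_eq_star_dotProduct, toEuc, ofEuc, star_trivial]
  simp [dotProduct_mulVec, mulVec_transpose, dotProduct_comm]

lemma toEuc_mulVec_ofEuc_smul (M : Matrix (Fin d) (Fin d) ℝ) (c : ℝ)
    (v : EuclideanSpace ℝ (Fin d)) :
    toEuc (M *ᵥ ofEuc (c • v)) = c • toEuc (M *ᵥ ofEuc v) := by
  simp [toEuc, ofEuc, mulVec_smul]

@[fun_prop]
lemma Continuous.toEuc_mulVec {X : Type*} [TopologicalSpace X] {M : X → Fin d → Fin d → ℝ}
    {v : X → EuclideanSpace ℝ (Fin d)} (hM : Continuous M) (hv : Continuous v) :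
    Continuous fun a => toEuc (of (M a) *ᵥ ofEuc (v a)) :=
  (PiLp.continuous_toLp 2 _).comp <| hM.matrix_mulVec ((PiLp.continuous_ofLp 2 _).comp hv)

lemma minSingular_eq_iInf (A : Matrix (Fin d) (Fin d) ℝ) :
    minSingular A = ⨅ t : {t : EuclideanSpace ℝ (Fin d) // ‖t‖ = 1}, ‖toEuc (Aᵀ *ᵥ ofEuc t)‖ := by
  rw [minSingular, iInf, Set.range]
  congr 1
  ext y
  simp [eq_comm]

lemma minSingular_nonneg (A : Matrix (Fin d) (Fin d) ℝ) : 0 ≤ minSingular A :=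
  Real.sInf_nonneg (by rintro _ ⟨t, -, rfl⟩; exact norm_nonneg _)

lemma minSingular_mul_norm_le (A : Matrix (Fin d) (Fin d) ℝ) (t : EuclideanSpace ℝ (Fin d)) :
    minSingular A * ‖t‖ ≤ ‖toEuc (Aᵀ *ᵥ ofEuc t)‖ := by
  rcases eq_or_ne t 0 with rfl | ht
  · simp
  have hnorm : 0 < ‖t‖ := norm_pos_iff.mpr ht
  have hle : minSingular A ≤ ‖toEuc (Aᵀ *ᵥ ofEuc (‖t‖⁻¹ • t))‖ :=
    csInf_le ⟨0, by rintro _ ⟨s, -, rfl⟩; exact norm_nonneg _⟩ ⟨_, norm_smul_inv_norm ht, rfl⟩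
  rwa [toEuc_mulVec_ofEuc_smul, norm_smul, norm_inv, norm_norm, ← div_eq_inv_mul,
    le_div_iff₀ hnorm] at hle

lemma measurable_minSingular : Measurable fun M : Fin d → Fin d → ℝ => minSingular (of M) := by
  simp only [minSingular_eq_iInf]
  refine (upperSemicontinuous_ciInf (fun _ => ⟨0, ?_⟩) fun t => ?_).measurable
  · rintro _ ⟨t, rfl⟩
    exact norm_nonneg _
  · exact ((PiLp.continuous_toLp 2 _).comp ((continuous_id (X := Matrix (Fin d) (Fin d) ℝ))
      |>.matrix_transpose.matrix_mulVec continuous_const)).norm.upperSemicontinuous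

end Euclidean

section CharIntegral

variable {Ω E : Type*} [MeasurableSpace Ω] {μ : Measure Ω} [NormedAddCommGroup E]
  [InnerProductSpace ℝ E]

lemma norm_integral_cexp_inner_le_one [IsProbabilityMeasure μ] (Y : Ω → E) (t : E) :
    ‖∫ ω, Complex.exp ((⟪t, Y ω⟫ : ℝ) * Complex.I) ∂μ‖ ≤ 1 := by
  simpa using norm_integral_le_of_norm_le_const (μ := μ) (C := 1)
    (.of_forall fun _ => (Complex.norm_exp_ofReal_mul_I _).le)

lemma cexp_inner_sum_add {ι : Type*} (t : E) (s : Finset ι) (v : ι → E) (c : E) :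
    Complex.exp ((⟪t, ∑ j ∈ s, v j + c⟫ : ℝ) * Complex.I) =
      Complex.exp ((⟪t, c⟫ : ℝ) * Complex.I) *
        ∏ j ∈ s, Complex.exp ((⟪t, v j⟫ : ℝ) * Complex.I) := by
  rw [inner_add_right, inner_sum, mul_comm (Complex.exp _), ← Complex.exp_sum, ← Complex.exp_add]
  push_cast
  rw [add_mul, Finset.sum_mul]

lemma integral_cexp_inner_eq_of_map_eq [MeasurableSpace E] [OpensMeasurableSpace E] {Y Y' : Ω → E}
    (hY : AEMeasurable Y μ) (hY' : AEMeasurable Y' μ) (h : μ.map Y = μ.map Y') (t : E) :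
    ∫ ω, Complex.exp ((⟪t, Y ω⟫ : ℝ) * Complex.I) ∂μ =
      ∫ ω, Complex.exp ((⟪t, Y' ω⟫ : ℝ) * Complex.I) ∂μ := by
  have hcont : Continuous fun v : E => Complex.exp ((⟪t, v⟫ : ℝ) * Complex.I) := by fun_prop
  rw [← integral_map hY hcont.aestronglyMeasurable, h, integral_map hY' hcont.aestronglyMeasurable]

lemma tendsto_integral_cexp_inner_of_ae_tendsto [IsFiniteMeasure μ] {Y : ℕ → Ω → E} {Y' : Ω → E}
    (hY : ∀ n, AEStronglyMeasurable (Y n) μ)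
    (hlim : ∀ᵐ ω ∂μ, Tendsto (fun n => Y n ω) atTop (𝓝 (Y' ω))) (t : E) :
    Tendsto (fun n => ∫ ω, Complex.exp ((⟪t, Y n ω⟫ : ℝ) * Complex.I) ∂μ) atTop
      (𝓝 (∫ ω, Complex.exp ((⟪t, Y' ω⟫ : ℝ) * Complex.I) ∂μ)) := by
  have hcont : Continuous fun v : E => Complex.exp ((⟪t, v⟫ : ℝ) * Complex.I) := by fun_prop
  refine tendsto_integral_of_dominated_convergence (fun _ => 1)
    (fun n => hcont.comp_aestronglyMeasurable (hY n)) (integrable_const 1)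
    (fun _ => .of_forall fun _ => (Complex.norm_exp_ofReal_mul_I _).le) ?_
  filter_upwards [hlim] with ω hω using (hcont.tendsto _).comp hω

end CharIntegral

section PsiSup

variable {Ω : Type*} [MeasurableSpace Ω] {μ : Measure Ω} {d : ℕ}

lemma psiSup_bddAbove [IsProbabilityMeasure μ] (Y : Ω → EuclideanSpace ℝ (Fin d)) (x : ℝ) :
    BddAbove {y : ℝ | ∃ t : EuclideanSpace ℝ (Fin d), x ≤ ‖t‖ ∧
      y = ‖∫ ω, Complex.exp ((⟪t, Y ω⟫ : ℝ) * Complex.I) ∂μ‖} :=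
  ⟨1, by rintro _ ⟨t, -, rfl⟩; exact norm_integral_cexp_inner_le_one Y t⟩

lemma le_psiSup [IsProbabilityMeasure μ] (Y : Ω → EuclideanSpace ℝ (Fin d)) {x : ℝ}
    {t : EuclideanSpace ℝ (Fin d)} (ht : x ≤ ‖t‖) :
    ‖∫ ω, Complex.exp ((⟪t, Y ω⟫ : ℝ) * Complex.I) ∂μ‖ ≤ psiSup μ Y x :=
  le_csSup (psiSup_bddAbove Y x) ⟨t, ht, rfl⟩

lemma psiSup_nonneg (Y : Ω → EuclideanSpace ℝ (Fin d)) (x : ℝ) : 0 ≤ psiSup μ Y x :=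
  Real.sSup_nonneg (by rintro _ ⟨t, -, rfl⟩; exact norm_nonneg _)

lemma psiSup_le_one [IsProbabilityMeasure μ] (Y : Ω → EuclideanSpace ℝ (Fin d)) (x : ℝ) :
    psiSup μ Y x ≤ 1 :=
  Real.sSup_le (by rintro _ ⟨t, -, rfl⟩; exact norm_integral_cexp_inner_le_one Y t) zero_le_one

lemma psiSup_antitone [IsProbabilityMeasure μ] (Y : Ω → EuclideanSpace ℝ (Fin d)) :
    Antitone (psiSup μ Y) :=
  fun _ _ hxy => Real.sSup_le (by rintro _ ⟨t, ht, rfl⟩; exact le_psiSup Y (hxy.trans ht))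
    (psiSup_nonneg Y _)

end PsiSup

lemma hasProd_iInf_prod_of_nonneg_of_le_one {ι : Type*} {f : ι → ℝ} (h0 : ∀ i, 0 ≤ f i)
    (h1 : ∀ i, f i ≤ 1) : HasProd f (⨅ s : Finset ι, ∏ i ∈ s, f i) :=
  tendsto_atTop_ciInf (Finset.prod_anti_set_of_le_one h0 h1)
    ⟨0, by rintro _ ⟨s, rfl⟩; exact Finset.prod_nonneg fun i _ => h0 i⟩

lemma tendsto_prod_range_tprod_of_nonneg_of_le_one {f : ℕ → ℝ} (h0 : ∀ i, 0 ≤ f i)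
    (h1 : ∀ i, f i ≤ 1) :
    Tendsto (fun n => ∏ i ∈ Finset.range n, f i) atTop (𝓝 (∏' i, f i)) :=
  (hasProd_iInf_prod_of_nonneg_of_le_one h0 h1).multipliable.hasProd.tendsto_prod_nat

section Independence

variable {Ω : Type*} [MeasurableSpace Ω] {μ : Measure Ω}

lemma ProbabilityTheory.iIndepFun.integral_finset_prod_comp {ι 𝓧 𝕜 : Type*} [RCLike 𝕜]
    [MeasurableSpace 𝓧] {X : ι → Ω → 𝓧} (hX : iIndepFun X μ) (mX : ∀ i, AEMeasurable (X i) μ)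
    {f : ι → 𝓧 → 𝕜} (hf : ∀ i, AEStronglyMeasurable (f i) (μ.map (X i))) (s : Finset ι) :
    ∫ ω, ∏ i ∈ s, f i (X i ω) ∂μ = ∏ i ∈ s, ∫ ω, f i (X i ω) ∂μ := by
  simp_rw [← Finset.prod_coe_sort s]
  exact (hX.precomp Subtype.val_injective).integral_fun_prod_comp (fun i => mX i) fun i => hf i

lemma norm_integral_comp_le_of_indepFun [IsFiniteMeasure μ] {α β E : Type*} [MeasurableSpace α]
    [MeasurableSpace β] [NormedAddCommGroup E] [NormedSpace ℝ E] {W : Ω → α} {Z : Ω → β}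
    (hWZ : IndepFun W Z μ) (hW : AEMeasurable W μ) (hZ : AEMeasurable Z μ) {g : α × β → E}
    (hg : StronglyMeasurable g) (hg_int : Integrable g ((μ.map W).prod (μ.map Z)))
    {h : α → ℝ} (hh : Integrable h (μ.map W)) (hgh : ∀ w, ‖∫ ω, g (w, Z ω) ∂μ‖ ≤ h w) :
    ‖∫ ω, g (W ω, Z ω) ∂μ‖ ≤ ∫ ω, h (W ω) ∂μ := by
  have hfubini : ∫ ω, g (W ω, Z ω) ∂μ = ∫ w, ∫ ω, g (w, Z ω) ∂μ ∂(μ.map W) := by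
    rw [← integral_map (hW.prodMk hZ) hg.aestronglyMeasurable,
      (indepFun_iff_map_prod_eq_prod_map_map hW hZ).mp hWZ, integral_prod _ hg_int]
    refine integral_congr_ae (.of_forall fun w => ?_)
    exact integral_map hZ (hg.comp_measurable measurable_prodMk_left).aestronglyMeasurable
  rw [hfubini, ← integral_map hW hh.aestronglyMeasurable]
  exact (norm_integral_le_integral_norm _).trans
    (integral_mono_of_nonneg (.of_forall fun _ => norm_nonneg _) hh (.of_forall hgh))

end Independence

section Recursion

variable {Ω : Type*} [MeasurableSpace Ω] {μ : Measure Ω} [IsProbabilityMeasure μ] {d : ℕ}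
  {Xc : ℕ → Ω → EuclideanSpace ℝ (Fin d)} {A : ℕ → Ω → Matrix (Fin d) (Fin d) ℝ}
  {b : Ω → EuclideanSpace ℝ (Fin d)}

lemma norm_prod_psiSup_le_one {ι : Type*} (Y : ι → Ω → EuclideanSpace ℝ (Fin d)) (r : ι → ℝ)
    (s : Finset ι) : ‖∏ j ∈ s, psiSup μ (Y j) (r j)‖ ≤ 1 := by
  rw [norm_prod]
  refine Finset.prod_le_one (fun _ _ => norm_nonneg _) fun j _ => ?_
  rw [Real.norm_of_nonneg (psiSup_nonneg _ _)]
  exact psiSup_le_one _ _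

lemma measurable_psiSup_minSingular_mul {α : Type*} [MeasurableSpace α]
    {M : α → Fin d → Fin d → ℝ} (hM : Measurable M) (Y : Ω → EuclideanSpace ℝ (Fin d)) (x : ℝ) :
    Measurable fun a => psiSup μ Y (minSingular (of (M a)) * x) :=
  (psiSup_antitone Y).measurable.comp ((measurable_minSingular.comp hM).mul_const x)

lemma norm_integral_prod_cexp_inner_mulVec_le (hXcm : ∀ j, Measurable (Xc j))
    (hiid : iIndepFun Xc μ) (M : ℕ → Matrix (Fin d) (Fin d) ℝ) {x : ℝ}
    {t : EuclideanSpace ℝ (Fin d)} (ht : x ≤ ‖t‖) (s : Finset ℕ) :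
    ‖∫ ω, ∏ j ∈ s, Complex.exp ((⟪t, toEuc (M j *ᵥ ofEuc (Xc j ω))⟫ : ℝ) * Complex.I) ∂μ‖ ≤
      ∏ j ∈ s, psiSup μ (Xc j) (minSingular (M j) * x) := by
  simp_rw [inner_toEuc_mulVec]
  rw [hiid.integral_finset_prod_comp (fun j => (hXcm j).aemeasurable)
    (f := fun j v => Complex.exp ((⟪toEuc ((M j)ᵀ *ᵥ ofEuc t), v⟫ : ℝ) * Complex.I))
    (fun j => Continuous.aestronglyMeasurable (by fun_prop)) s, norm_prod]
  exact Finset.prod_le_prod (fun _ _ => norm_nonneg _) fun j _ => le_psiSup _ <|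
    (mul_le_mul_of_nonneg_left ht (minSingular_nonneg _)).trans (minSingular_mul_norm_le _ _)

lemma norm_integral_cexp_inner_partialSum_le (hXcm : ∀ j, Measurable (Xc j))
    (hAm : ∀ j, Measurable fun ω => Matrix.of.symm (A j ω)) (hbm : Measurable b)
    (hiid : iIndepFun Xc μ)
    (hindep : IndepFun (fun ω => ((fun j => Matrix.of.symm (A j ω)), b ω))
      (fun ω (j : ℕ) => Xc j ω) μ)
    {x : ℝ} {t : EuclideanSpace ℝ (Fin d)} (ht : x ≤ ‖t‖) (s : Finset ℕ) :
    ‖∫ ω, Complex.exp ((⟪t, ∑ j ∈ s, toEuc (A j ω *ᵥ ofEuc (Xc j ω)) + b ω⟫ : ℝ) *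
      Complex.I) ∂μ‖ ≤ ∫ ω, ∏ j ∈ s, psiSup μ (Xc j) (minSingular (A j ω) * x) ∂μ := by
  let g : ((ℕ → Fin d → Fin d → ℝ) × EuclideanSpace ℝ (Fin d)) ×
      (ℕ → EuclideanSpace ℝ (Fin d)) → ℂ := fun p =>
    Complex.exp ((⟪t, p.1.2⟫ : ℝ) * Complex.I) *
      ∏ j ∈ s, Complex.exp ((⟪t, toEuc (of (p.1.1 j) *ᵥ ofEuc (p.2 j))⟫ : ℝ) * Complex.I)
  let h : (ℕ → Fin d → Fin d → ℝ) × EuclideanSpace ℝ (Fin d) → ℝ := fun w =>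
    ∏ j ∈ s, psiSup μ (Xc j) (minSingular (of (w.1 j)) * x)
  have hg : Continuous g := by fun_prop
  have hh : Measurable h := Finset.measurable_prod _ fun j _ =>
    measurable_psiSup_minSingular_mul ((measurable_pi_apply j).comp measurable_fst) _ x
  have hgh : ∀ w, ‖∫ ω, g (w, fun j => Xc j ω) ∂μ‖ ≤ h w := fun w => by
    dsimp only [g, h]
    rw [integral_const_mul, norm_mul, Complex.norm_exp_ofReal_mul_I, one_mul]
    exact norm_integral_prod_cexp_inner_mulVec_le hXcm hiid _ ht s
  simp_rw [cexp_inner_sum_add]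
  refine norm_integral_comp_le_of_indepFun hindep
    ((measurable_pi_lambda _ hAm).prodMk hbm).aemeasurable
    (measurable_pi_lambda _ hXcm).aemeasurable hg.measurable.stronglyMeasurable
    (.of_bound hg.aestronglyMeasurable 1 (.of_forall fun p => ?_))
    (.of_bound hh.aestronglyMeasurable 1 (.of_forall fun w => norm_prod_psiSup_le_one _ _ _)) hgh
  simp [g, norm_prod, Complex.norm_exp_ofReal_mul_I]

lemma tendsto_integral_prod_range_psiSup
    (hAm : ∀ j, Measurable fun ω => Matrix.of.symm (A j ω)) (x : ℝ) :
    Tendsto (fun n => ∫ ω, ∏ j ∈ Finset.range n, psiSup μ (Xc j) (minSingular (A j ω) * x) ∂μ)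
      atTop (𝓝 (∫ ω, ∏' j, psiSup μ (Xc j) (minSingular (A j ω) * x) ∂μ)) :=
  tendsto_integral_of_dominated_convergence (fun _ => 1)
    (fun _ => (Finset.measurable_prod _ fun j _ =>
      measurable_psiSup_minSingular_mul (hAm j) _ x).aestronglyMeasurable)
    (integrable_const 1) (fun _ => .of_forall fun _ => norm_prod_psiSup_le_one _ _ _)
    (.of_forall fun _ => tendsto_prod_range_tprod_of_nonneg_of_le_one
      (fun _ => psiSup_nonneg _ _) fun _ => psiSup_le_one _ _)

end Recursion

/-- If `X =_d Σ_j A_j X^{(j)} + b` (with the usual independence and a.s. convergence),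
`ψ(x) := sup_{‖t‖≥x} |φ(t)|`, `ψ_j` the corresponding functions for the `X^{(j)}`, and
`α_j := min_{‖t‖=1} ‖A_jᵀ t‖`, then `ψ(x) ≤ E[∏_j ψ_j(α_j x)]` for all `x ≥ 0`. -/
theorem psiSup_recursion_bound
    {Ω : Type*} [MeasurableSpace Ω] (μ : Measure Ω) [IsProbabilityMeasure μ]
    {d : ℕ} (X : Ω → EuclideanSpace ℝ (Fin d))
    (Xc : ℕ → Ω → EuclideanSpace ℝ (Fin d))
    (A : ℕ → Ω → Matrix (Fin d) (Fin d) ℝ)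
    (b : Ω → EuclideanSpace ℝ (Fin d))
    (hXm : Measurable X) (hXcm : ∀ j, Measurable (Xc j))
    (hAm : ∀ j, Measurable fun ω => Matrix.of.symm (A j ω))
    (hbm : Measurable b)
    (hiid : iIndepFun Xc μ)
    (hindep : IndepFun (fun ω => ((fun j => Matrix.of.symm (A j ω)), b ω))
      (fun ω (j : ℕ) => Xc j ω) μ)
    (hsum : ∀ᵐ ω ∂μ, Summable fun j => toEuc (A j ω *ᵥ ofEuc (Xc j ω)))
    (hlaw : μ.map X =
      μ.map (fun ω => (∑' j, toEuc (A j ω *ᵥ ofEuc (Xc j ω))) + b ω)) :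
    ∀ x : ℝ, 0 ≤ x →
      psiSup μ X x ≤ ∫ ω, ∏' j, psiSup μ (Xc j) (minSingular (A j ω) * x) ∂μ := by
  intro x _
  have hpartial : ∀ n, Measurable fun ω =>
      ∑ j ∈ Finset.range n, toEuc (A j ω *ᵥ ofEuc (Xc j ω)) + b ω := fun n =>
    (Finset.measurable_sum _ fun j _ => (continuous_fst.toEuc_mulVec continuous_snd).measurable.comp
      ((hAm j).prodMk (hXcm j))).add hbm
  have hlim : ∀ᵐ ω ∂μ, Tendsto (fun n => ∑ j ∈ Finset.range n, toEuc (A j ω *ᵥ ofEuc (Xc j ω)) +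
      b ω) atTop (𝓝 ((∑' j, toEuc (A j ω *ᵥ ofEuc (Xc j ω))) + b ω)) := by
    filter_upwards [hsum] with ω hω using hω.hasSum.tendsto_sum_nat.add_const (b ω)
  refine Real.sSup_le ?_ (integral_nonneg fun ω => tprod_nonneg fun _ => psiSup_nonneg _ _)
  rintro _ ⟨t, ht, rfl⟩
  rw [integral_cexp_inner_eq_of_map_eq hXm.aemeasurable
    (aemeasurable_of_tendsto_metrizable_ae' (fun n => (hpartial n).aemeasurable) hlim) hlaw]
  exact le_of_tendsto_of_tendsto'
    (tendsto_integral_cexp_inner_of_ae_tendsto (fun n => (hpartial n).aestronglyMeasurable)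
      hlim t).norm
    (tendsto_integral_prod_range_psiSup hAm x)
    fun _ => norm_integral_cexp_inner_partialSum_le hXcm hAm hbm hiid hindep ht _
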